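/- arXiv:1004.0666 — 6 statements merged into one kernel-verified Lean document; each statement's English description precedes it below -/
import Mathlib

section
/- Let A be a complex unital Banach algebra and let a, s, c ∈ A. Suppose that for every natural number j ≥ 0, ⁅(ad a)^[j] c, s⁆ = 0. Then for every t ∈ ℝ, exp(−t • (a + s)) * c * exp(t • (a + s)) = exp(−t • a) * c * exp(t • a). -/
open NormedSpace

/-! Conjugation by exponentials is the exponential of the bounded operator `ad x = ⁅x, ·⁆`:
`exp (ad x) c = exp x * c * exp (-x)`, because `ad x` is the difference of the commuting operators
of left and right multiplication by `x`, each of which exponentiates to multiplication by `exp x`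
(resp. `exp (-x)`). As the series of `exp T c` involves only the vectors `T ^ n c`, it remains to see
`ad (a + s) ^ n c = ad a ^ n c`, which follows by induction since `s` commutes with every
`ad a ^ n c`. Rescaling by `t` is linearity of `ad`. -/

lemma iterate_lie_add_apply_eq {R : Type*} [Ring R] {a s c : R}
    (h : ∀ j : ℕ, ⁅(fun x ↦ ⁅a, x⁆)^[j] c, s⁆ = 0) (n : ℕ) :
    (fun x ↦ ⁅a + s, x⁆)^[n] c = (fun x ↦ ⁅a, x⁆)^[n] c := by
  induction n with
  | zero => rfl
  | succ n ih =>
    have hs := sub_eq_zero.mp ((Ring.lie_def _ _).symm.trans (h n))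
    rw [Function.iterate_succ_apply', Function.iterate_succ_apply', ih, Ring.lie_def,
      Ring.lie_def, add_mul, mul_add, hs]
    abel

lemma mem_eball_expSeries_radius {𝕜 B : Type*} [RCLike 𝕜] [NormedRing B] [NormedAlgebra 𝕜 B]
    (x : B) : x ∈ Metric.eball (0 : B) (expSeries 𝕜 B).radius := by
  simp [expSeries_radius_eq_top]

namespace ContinuousLinearMap

lemma exp_apply_eq_of_pow_apply_eq {𝕜 E : Type*} [RCLike 𝕜] [NormedAddCommGroup E]
    [NormedSpace 𝕜 E] [CompleteSpace E] {T S : E →L[𝕜] E} {c : E}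
    (h : ∀ n : ℕ, (T ^ n) c = (S ^ n) c) : exp T c = exp S c := by
  have hsum (U : E →L[𝕜] E) : exp U c = ∑' n : ℕ, (n.factorial⁻¹ : 𝕜) • (U ^ n) c := by
    rw [exp_eq_tsum 𝕜, ← apply_apply c, (apply 𝕜 E c).map_tsum (expSeries_summable' U)]
    simp
  simp only [hsum, h]

variable (𝕜 A : Type*) [RCLike 𝕜] [NormedRing A] [NormedAlgebra 𝕜 A]

noncomputable def mulLeftRingHom : A →+* (A →L[𝕜] A) where
  toFun := mul 𝕜 A
  map_one' := by ext; simp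
  map_mul' x y := by ext; simp [mul_assoc]
  map_zero' := map_zero _
  map_add' := map_add _

noncomputable def mulRightRingHom : Aᵐᵒᵖ →+* (A →L[𝕜] A) where
  toFun x := (mul 𝕜 A).flip x.unop
  map_one' := by ext; simp
  map_mul' x y := by ext; simp [mul_assoc]
  map_zero' := by simp
  map_add' x y := by simp

noncomputable def ad : A →L[𝕜] A →L[𝕜] A := mul 𝕜 A - (mul 𝕜 A).flip

variable {𝕜 A}

lemma ad_apply (x y : A) : ad 𝕜 A x y = ⁅x, y⁆ := by
  simp [ad, Ring.lie_def]

lemma pow_ad_apply (x y : A) (n : ℕ) : (ad 𝕜 A x ^ n) y = (fun z ↦ ⁅x, z⁆)^[n] y := by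
  have hx : ⇑(ad 𝕜 A x) = fun z ↦ ⁅x, z⁆ := funext (ad_apply x)
  rw [FunLike.coe_pow_eq_iterate, hx]

variable [CompleteSpace A]

lemma exp_mul (x : A) : exp (mul 𝕜 A x) = mul 𝕜 A (exp x) :=
  (map_exp_of_mem_ball (mulLeftRingHom 𝕜 A) (mul 𝕜 A).continuous x
    (mem_eball_expSeries_radius (𝕜 := 𝕜) x)).symm

lemma exp_flip_mul (x : A) : exp ((mul 𝕜 A).flip x) = (mul 𝕜 A).flip (exp x) := by
  have h := map_exp_of_mem_ball (mulRightRingHom 𝕜 A)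
    ((mul 𝕜 A).flip.continuous.comp MulOpposite.continuous_unop) (MulOpposite.op x)
    (mem_eball_expSeries_radius (𝕜 := 𝕜) _)
  simpa [mulRightRingHom, exp_op] using h.symm

lemma exp_ad_apply (x c : A) : exp (ad 𝕜 A x) c = exp x * c * exp (-x) := by
  have hcomm : Commute (mul 𝕜 A x) ((mul 𝕜 A).flip (-x)) := by
    ext; simp [mul_assoc]
  rw [ad, sub_apply, sub_eq_add_neg, ← map_neg, exp_add_of_commute_of_mem_ball hcomm
    (mem_eball_expSeries_radius (𝕜 := 𝕜) _) (mem_eball_expSeries_radius _), exp_mul, exp_flip_mul]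
  simp [mul_assoc]

end ContinuousLinearMap

/-- Open-loop invariance at the level of Heisenberg-picture evolution: if the coupling `s`
commutes with all iterated `ad a`-brackets of `c`, then conjugating `c` by the propagator of
`a + s` equals conjugating by the propagator of `a` alone. -/
theorem heisenberg_conjugation_invariance (A : Type*) [NormedRing A] [NormedAlgebra ℂ A]
    [CompleteSpace A] (a s c : A)
    (h : ∀ j : ℕ, ⁅(fun x => ⁅a, x⁆)^[j] c, s⁆ = 0) :
    ∀ t : ℝ, exp ((-t) • (a + s)) * c * exp (t • (a + s)) =
      exp ((-t) • a) * c * exp (t • a) := by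
  intro t
  have hconj (y : A) :
      exp ((-t) • y) * c * exp (t • y) = exp ((-t) • ContinuousLinearMap.ad ℝ A y) c := by
    rw [← map_smul, ContinuousLinearMap.exp_ad_apply, ← neg_smul, neg_neg]
  rw [hconj, hconj]
  refine ContinuousLinearMap.exp_apply_eq_of_pow_apply_eq fun n ↦ ?_
  simp only [smul_pow, smul_apply, ContinuousLinearMap.pow_ad_apply,
    iterate_lie_add_apply_eq h]
end

section
/- Let E be a complex Hilbert space, let A, S, C be continuous linear maps from E to E with A and S skew-adjoint (adjoint A = −A and adjoint S = −S). Suppose that for every natural number j ≥ 0, ⁅(ad A)^[j] C, S⁆ = 0. Then for every t ∈ ℝ and every x ∈ E, ⟪exp(t • (A + S)) x, C (exp(t • (A + S)) x)⟫ = ⟪exp(t • A) x, C (exp(t • A) x)⟫. -/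
/-!
For skew-adjoint `B`, `exp (t • B)` is unitary with adjoint `exp (-(t • B))`, so
`⟪exp (t • B) x, C (exp (t • B) x)⟫ = ⟪x, exp (-(t • B)) * C * exp (t • B) x⟫`, and by Hadamard's
lemma the conjugated operator is `exp (ad (-(t • B))) C`. If `S` commutes with every
`(ad A)^[j] C`, then `(ad (A + S))^[n] C = (ad A)^[n] C` for all `n`, so the exponential series
for `B = A + S` and for `B = A` agree term by term.
-/

open NormedSpace

theorem iterate_lie_add_of_lie_eq_zero {R : Type*} [Ring R] {a s c : R}
    (h : ∀ j : ℕ, ⁅(⁅a, ·⁆)^[j] c, s⁆ = 0) (n : ℕ) : (⁅a + s, ·⁆)^[n] c = (⁅a, ·⁆)^[n] c := by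
  induction n with
  | zero => rfl
  | succ n ih =>
    have hs := h n
    rw [Ring.lie_def, sub_eq_zero] at hs
    rw [Function.iterate_succ_apply', Function.iterate_succ_apply', ih, Ring.lie_def,
      Ring.lie_def, add_mul, mul_add, ← hs]
    abel

section OperatorExp

variable {𝕂 E : Type*} [RCLike 𝕂] [NormedAddCommGroup E] [NormedSpace 𝕂 E] [CompleteSpace E]

theorem hasSum_exp_apply (T : E →L[𝕂] E) (x : E) :
    HasSum (fun n : ℕ => (n.factorial⁻¹ : 𝕂) • (T ^ n) x) (exp T x) :=
  (exp_series_hasSum_exp' (𝕂 := 𝕂) T).mapL (ContinuousLinearMap.apply 𝕂 E x)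

theorem exp_apply_eq_of_pow_apply_eq {T₁ T₂ : E →L[𝕂] E} {x : E}
    (h : ∀ n : ℕ, (T₁ ^ n) x = (T₂ ^ n) x) : exp T₁ x = exp T₂ x :=
  (hasSum_exp_apply T₁ x).unique <| by simpa only [h] using hasSum_exp_apply T₂ x

end OperatorExp

section BanachAlgebra

variable {𝕂 𝔸 : Type*} [RCLike 𝕂] [NormedRing 𝔸] [NormedAlgebra 𝕂 𝔸]

variable (𝕂) in
/-- `LieAlgebra.ad` lands in `Module.End`, which carries no norm; this bundled version has an
exponential. -/
noncomputable def adCLM : 𝔸 →L[𝕂] 𝔸 →L[𝕂] 𝔸 :=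
  ContinuousLinearMap.mul 𝕂 𝔸 - (ContinuousLinearMap.mul 𝕂 𝔸).flip

theorem coe_adCLM (a : 𝔸) : ⇑(adCLM 𝕂 a) = (⁅a, ·⁆) := by
  ext c
  simp [adCLM, Ring.lie_def]

theorem adCLM_pow_apply (a c : 𝔸) (n : ℕ) : (adCLM 𝕂 a ^ n) c = (⁅a, ·⁆)^[n] c := by
  rw [pow_apply_eq_iterate, coe_adCLM]

variable [CompleteSpace 𝔸]

theorem ContinuousLinearMap.exp_mul_apply (a c : 𝔸) :
    exp (ContinuousLinearMap.mul 𝕂 𝔸 a) c = exp a * c := by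
  refine (hasSum_exp_apply _ c).unique ?_
  have hmul : ⇑(ContinuousLinearMap.mul 𝕂 𝔸 a) = (a * ·) := rfl
  simpa [hmul, smul_mul_assoc] using (exp_series_hasSum_exp' (𝕂 := 𝕂) a).mul_right c

theorem ContinuousLinearMap.exp_flip_mul_apply (a c : 𝔸) :
    exp ((ContinuousLinearMap.mul 𝕂 𝔸).flip a) c = c * exp a := by
  refine (hasSum_exp_apply _ c).unique ?_
  have hmul : ⇑((ContinuousLinearMap.mul 𝕂 𝔸).flip a) = (· * a) := rfl
  simpa [hmul] using (exp_series_hasSum_exp' (𝕂 := 𝕂) a).mul_left c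

theorem exp_mul_mul_exp_neg (a c : 𝔸) : exp a * c * exp (-a) = exp (adCLM 𝕂 a) c := by
  have hcomm : Commute (ContinuousLinearMap.mul 𝕂 𝔸 a) ((ContinuousLinearMap.mul 𝕂 𝔸).flip a) :=
    ContinuousLinearMap.ext fun c => (mul_assoc a c a).symm
  rw [adCLM, sub_apply, sub_eq_add_neg,
    exp_add_of_commute_of_mem_ball (𝕂 := 𝕂) hcomm.neg_right
      ((expSeries_radius_eq_top 𝕂 (𝔸 →L[𝕂] 𝔸)).symm ▸ edist_lt_top _ _)
      ((expSeries_radius_eq_top 𝕂 (𝔸 →L[𝕂] 𝔸)).symm ▸ edist_lt_top _ _),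
    mul_apply_eq_comp, ← map_neg, ContinuousLinearMap.exp_flip_mul_apply,
    ContinuousLinearMap.exp_mul_apply, mul_assoc]

theorem exp_adCLM_smul_add_apply {a s c : 𝔸} (h : ∀ j : ℕ, ⁅(⁅a, ·⁆)^[j] c, s⁆ = 0) (r : 𝕂) :
    exp (adCLM 𝕂 (r • (a + s))) c = exp (adCLM 𝕂 (r • a)) c :=
  exp_apply_eq_of_pow_apply_eq fun n => by
    simp only [map_smul, smul_pow, smul_apply, adCLM_pow_apply,
      iterate_lie_add_of_lie_eq_zero h]

end BanachAlgebra

section HilbertSpace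

open ContinuousLinearMap

variable {𝕜 E : Type*} [RCLike 𝕜] [NormedAddCommGroup E] [InnerProductSpace 𝕜 E] [CompleteSpace E]

theorem adjoint_ofReal_smul_of_adjoint_eq_neg {B : E →L[𝕜] E} (hB : adjoint B = -B) (t : ℝ) :
    adjoint ((t : 𝕜) • B) = -((t : 𝕜) • B) := by
  rw [map_smulₛₗ, hB, RCLike.conj_ofReal, smul_neg]

theorem inner_exp_apply_apply_exp_apply {B : E →L[𝕜] E} (hB : adjoint B = -B) (C : E →L[𝕜] E)
    (x : E) : inner 𝕜 (exp B x) (C (exp B x)) = inner 𝕜 x (exp (adCLM 𝕜 (-B)) C x) := by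
  rw [← exp_mul_mul_exp_neg, neg_neg, ← adjoint_inner_right, ← star_eq_adjoint, star_exp,
    star_eq_adjoint, hB]
  rfl

end HilbertSpace

/-- If the skew-adjoint interaction `S` commutes with all iterated `ad A`-brackets of the
coherence operator `C`, then the scalar map `y(ξ) = ⟪ξ, C ξ⟫` along the evolution generated
by `A + S` coincides with its value along the evolution generated by `A` alone. -/
theorem scalar_map_decoupled_from_interaction (E : Type*) [NormedAddCommGroup E]
    [InnerProductSpace ℂ E] [CompleteSpace E] (A S C : E →L[ℂ] E)
    (hA : ContinuousLinearMap.adjoint A = -A) (hS : ContinuousLinearMap.adjoint S = -S)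
    (h : ∀ j : ℕ, ⁅(fun X => ⁅A, X⁆)^[j] C, S⁆ = 0) :
    ∀ (t : ℝ) (x : E),
      (inner ℂ (exp (t • (A + S)) x) (C (exp (t • (A + S)) x)) : ℂ) =
        (inner ℂ (exp (t • A) x) (C (exp (t • A) x)) : ℂ) := by
  intro t x
  have hAS : ContinuousLinearMap.adjoint (A + S) = -(A + S) := by rw [map_add, hA, hS, neg_add]
  simp only [RCLike.real_smul_eq_coe_smul (K := ℂ)]
  rw [inner_exp_apply_apply_exp_apply (adjoint_ofReal_smul_of_adjoint_eq_neg hAS t),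
    inner_exp_apply_apply_exp_apply (adjoint_ofReal_smul_of_adjoint_eq_neg hA t), ← neg_smul,
    ← neg_smul, exp_adCLM_smul_add_apply h]
end

section
/- Let C, S, H₀, H₁, …, H_r be n × n complex matrices and let 𝔠 be a ℂ-linear subspace of the n × n matrices such that: C ∈ 𝔠; for every X ∈ 𝔠 and every 0 ≤ i ≤ r, ⁅X, H_i⁆ ∈ 𝔠; and ⁅X, S⁆ = 0 for every X ∈ 𝔠. Then for every k, every list of times t₁, …, t_k ∈ ℝ and every piecewise-constant controls u(m, i) ∈ ℝ (1 ≤ m ≤ k, 1 ≤ i ≤ r), setting A_m = H₀ + Σᵢ u(m, i) • H_i, one has exp(−t₁ • (A₁ + S)) ⋯ exp(−t_k • (A_k + S)) * C * exp(t_k • (A_k + S)) ⋯ exp(t₁ • (A₁ + S)) = exp(−t₁ • A₁) ⋯ exp(−t_k • A_k) * C * exp(t_k • A_k) ⋯ exp(t₁ • A₁). -/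
/-!
Write `U_B(t) X = exp(-tB) X exp(tB)`. It solves the linear ODE `X' = ⁅X, B⁆`, so if `𝔠` is
stable under `⁅·, B⁆` and closed, the image of `U_B(t) X` in the quotient by `𝔠` solves the
induced linear ODE with zero initial value and hence vanishes: `U_B(t)` preserves `𝔠`. If
moreover `S` commutes with `𝔠`, then `⁅U_B(t) X, B + S⁆ = ⁅U_B(t) X, B⁆`, so `U_B(t) X` and
`U_{B+S}(t) X` solve the same ODE `X' = ⁅X, B + S⁆` with the same initial value and coincide.
Peeling off one constant piece of the control at a time gives the theorem.
-/

open NormedSpace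

namespace Submodule

variable {R A : Type*} [CommRing R] [Ring A] [Algebra R A]

def bracketNormalizer (𝔠 : Submodule R A) : Submodule R A where
  carrier := {B | ∀ X ∈ 𝔠, ⁅X, B⁆ ∈ 𝔠}
  zero_mem' X _ := by simp [Ring.lie_def]
  add_mem' {B B'} hB hB' X hX := by
    rw [Ring.lie_def, mul_add, add_mul, add_sub_add_comm]
    exact add_mem (hB X hX) (hB' X hX)
  smul_mem' r B hB X hX := by
    rw [Ring.lie_def, mul_smul_comm, smul_mul_assoc, ← smul_sub]
    exact 𝔠.smul_mem r (hB X hX)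

theorem mem_bracketNormalizer {𝔠 : Submodule R A} {B : A} :
    B ∈ 𝔠.bracketNormalizer ↔ ∀ X ∈ 𝔠, ⁅X, B⁆ ∈ 𝔠 :=
  Iff.rfl

end Submodule

theorem eq_of_hasDerivAt_clm {E : Type*} [NormedAddCommGroup E] [NormedSpace ℝ E]
    (T : E →L[ℝ] E) {f g : ℝ → E} (hf : ∀ t, HasDerivAt f (T (f t)) t)
    (hg : ∀ t, HasDerivAt g (T (g t)) t) (h0 : f 0 = g 0) : f = g :=
  ODE_solution_unique_univ (v := fun _ => T) (s := fun _ => Set.univ) (t₀ := 0)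
    (fun _ => T.lipschitz.lipschitzOnWith) (fun t => ⟨hf t, trivial⟩)
    (fun t => ⟨hg t, trivial⟩) h0

section HeisenbergEvolution

variable {𝔸 : Type*} [NormedRing 𝔸] [NormedAlgebra ℝ 𝔸]

variable (𝔸) in
noncomputable def lieRightL (B : 𝔸) : 𝔸 →L[ℝ] 𝔸 :=
  (ContinuousLinearMap.mul ℝ 𝔸).flip B - ContinuousLinearMap.mul ℝ 𝔸 B

@[simp]
theorem lieRightL_apply (B X : 𝔸) : lieRightL 𝔸 B X = ⁅X, B⁆ := by
  simp [lieRightL, Ring.lie_def]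

noncomputable def heisenbergEvol (B X : 𝔸) (t : ℝ) : 𝔸 :=
  exp ((-t) • B) * X * exp (t • B)

noncomputable def piecewiseHeisenbergEvol {k : ℕ} (A : Fin k → 𝔸) (t : Fin k → ℝ) (X : 𝔸) : 𝔸 :=
  (List.ofFn fun m => exp ((-(t m)) • A m)).prod * X *
    ((List.ofFn fun m => exp ((t m) • A m)).reverse).prod

theorem piecewiseHeisenbergEvol_zero (A : Fin 0 → 𝔸) (t : Fin 0 → ℝ) (X : 𝔸) :
    piecewiseHeisenbergEvol A t X = X := by
  simp [piecewiseHeisenbergEvol]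

theorem piecewiseHeisenbergEvol_succ {k : ℕ} (A : Fin (k + 1) → 𝔸) (t : Fin (k + 1) → ℝ)
    (X : 𝔸) :
    piecewiseHeisenbergEvol A t X =
      heisenbergEvol (A 0) (piecewiseHeisenbergEvol (Fin.tail A) (Fin.tail t) X) (t 0) := by
  simp only [piecewiseHeisenbergEvol, heisenbergEvol, List.ofFn_succ, List.prod_cons,
    List.reverse_cons, List.prod_append, List.prod_nil, mul_one, Fin.tail, mul_assoc]

variable [CompleteSpace 𝔸]

theorem hasDerivAt_heisenbergEvol (B X : 𝔸) (t : ℝ) :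
    HasDerivAt (heisenbergEvol B X) ⁅heisenbergEvol B X t, B⁆ t := by
  have hneg : HasDerivAt (fun s : ℝ => exp ((-s) • B)) (-(B * exp ((-t) • B))) t := by
    simpa [Function.comp_def] using (hasDerivAt_exp_smul_const' B (-t)).scomp t (hasDerivAt_neg t)
  refine ((hneg.mul_const X).mul (hasDerivAt_exp_smul_const B t)).congr_deriv ?_
  rw [heisenbergEvol, Ring.lie_def]
  noncomm_ring

theorem heisenbergEvol_mem {𝔠 : Submodule ℝ 𝔸} [IsClosed (𝔠 : Set 𝔸)] {B X : 𝔸}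
    (hB : ∀ Y ∈ 𝔠, ⁅Y, B⁆ ∈ 𝔠) (hX : X ∈ 𝔠) (t : ℝ) : heisenbergEvol B X t ∈ 𝔠 := by
  have hker : 𝔠 ≤ (𝔠.mkQL ∘L lieRightL 𝔸 B).ker := fun Y hY => by
    simpa using hB Y hY
  set T := 𝔠.liftQL (𝔠.mkQL ∘L lieRightL 𝔸 B) hker
  have hquot : (fun s => 𝔠.mkQL (heisenbergEvol B X s)) = fun _ => 0 := by
    refine eq_of_hasDerivAt_clm T (fun s => ?_) (fun s => by simpa using hasDerivAt_const s _) ?_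
    · exact (𝔠.mkQL.hasFDerivAt.comp_hasDerivAt s (hasDerivAt_heisenbergEvol B X s)).congr_deriv
        (by simp [T])
    · simpa [heisenbergEvol] using hX
  simpa using congrFun hquot t

theorem heisenbergEvol_add_eq {𝔠 : Submodule ℝ 𝔸} [IsClosed (𝔠 : Set 𝔸)] {B S X : 𝔸}
    (hB : ∀ Y ∈ 𝔠, ⁅Y, B⁆ ∈ 𝔠) (hS : ∀ Y ∈ 𝔠, ⁅Y, S⁆ = 0) (hX : X ∈ 𝔠) :
    heisenbergEvol (B + S) X = heisenbergEvol B X := by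
  refine eq_of_hasDerivAt_clm (lieRightL 𝔸 (B + S)) (fun s => ?_) (fun s => ?_)
    (by simp [heisenbergEvol])
  · simpa using hasDerivAt_heisenbergEvol (B + S) X s
  · refine (hasDerivAt_heisenbergEvol B X s).congr_deriv ?_
    calc ⁅heisenbergEvol B X s, B⁆
        = ⁅heisenbergEvol B X s, B⁆ + ⁅heisenbergEvol B X s, S⁆ := by
          rw [hS _ (heisenbergEvol_mem hB hX s), add_zero]
      _ = lieRightL 𝔸 (B + S) (heisenbergEvol B X s) := by
          rw [lieRightL_apply]; simp only [Ring.lie_def]; noncomm_ring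

theorem piecewiseHeisenbergEvol_mem {𝔠 : Submodule ℝ 𝔸} [IsClosed (𝔠 : Set 𝔸)] {k : ℕ}
    {A : Fin k → 𝔸} (hA : ∀ m, ∀ Y ∈ 𝔠, ⁅Y, A m⁆ ∈ 𝔠) (t : Fin k → ℝ) {X : 𝔸} (hX : X ∈ 𝔠) :
    piecewiseHeisenbergEvol A t X ∈ 𝔠 := by
  induction k with
  | zero => rwa [piecewiseHeisenbergEvol_zero]
  | succ k ih =>
    rw [piecewiseHeisenbergEvol_succ]
    exact heisenbergEvol_mem (hA 0) (ih (fun m => hA m.succ) (Fin.tail t)) (t 0)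

theorem piecewiseHeisenbergEvol_add_eq {𝔠 : Submodule ℝ 𝔸} [h𝔠 : IsClosed (𝔠 : Set 𝔸)] {k : ℕ}
    {A : Fin k → 𝔸} {S : 𝔸} (hA : ∀ m, ∀ Y ∈ 𝔠, ⁅Y, A m⁆ ∈ 𝔠) (hS : ∀ Y ∈ 𝔠, ⁅Y, S⁆ = 0)
    (t : Fin k → ℝ) {X : 𝔸} (hX : X ∈ 𝔠) :
    piecewiseHeisenbergEvol (fun m => A m + S) t X = piecewiseHeisenbergEvol A t X := by
  induction k with
  | zero => simp only [piecewiseHeisenbergEvol_zero]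
  | succ k ih =>
    rw [piecewiseHeisenbergEvol_succ, piecewiseHeisenbergEvol_succ]
    have htail : Fin.tail (fun m => A m + S) = fun m => Fin.tail A m + S := rfl
    rw [htail, ih (A := Fin.tail A) (fun m => hA m.succ) (Fin.tail t)]
    exact congrFun (heisenbergEvol_add_eq (hA 0) hS
      (piecewiseHeisenbergEvol_mem (fun m => hA m.succ) (Fin.tail t) hX)) (t 0)

end HeisenbergEvolution

/-- Finite-dimensional, piecewise-constant-control form of the open-loop invariance theorem:
if the subspace `𝔠` contains `C`, is stable under bracketing with the drift `H0` and the
controls `H i`, and commutes with the decoherence Hamiltonian `S`, then the Heisenberg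
evolution of `C` under the controlled dynamics with `S` present equals that with `S` absent,
for all piecewise-constant controls. -/
theorem piecewise_constant_open_loop_invariance (n r : ℕ)
    (C S H0 : Matrix (Fin n) (Fin n) ℂ) (H : Fin r → Matrix (Fin n) (Fin n) ℂ)
    (𝔠 : Submodule ℂ (Matrix (Fin n) (Fin n) ℂ))
    (hC : C ∈ 𝔠)
    (h0 : ∀ X ∈ 𝔠, ⁅X, H0⁆ ∈ 𝔠)
    (hi : ∀ X ∈ 𝔠, ∀ i : Fin r, ⁅X, H i⁆ ∈ 𝔠)
    (hS : ∀ X ∈ 𝔠, ⁅X, S⁆ = 0) :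
    ∀ (k : ℕ) (t : Fin k → ℝ) (u : Fin k → Fin r → ℝ),
      (List.ofFn fun m => exp ((-(t m)) • ((H0 + ∑ i, u m i • H i) + S))).prod * C *
        ((List.ofFn fun m => exp ((t m) • ((H0 + ∑ i, u m i • H i) + S))).reverse).prod =
      (List.ofFn fun m => exp ((-(t m)) • (H0 + ∑ i, u m i • H i))).prod * C *
        ((List.ofFn fun m => exp ((t m) • (H0 + ∑ i, u m i • H i))).reverse).prod := by
  intro k t u
  let _ := Matrix.linftyOpNormedRing (n := Fin n) (α := ℂ)
  let _ := Matrix.linftyOpNormedAlgebra (R := ℝ) (n := Fin n) (α := ℂ)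
  let 𝔠ℝ := 𝔠.restrictScalars ℝ
  have h𝔠 : IsClosed (𝔠ℝ : Set (Matrix (Fin n) (Fin n) ℂ)) := 𝔠.closed_of_finiteDimensional
  have hA : ∀ m, H0 + ∑ i, u m i • H i ∈ 𝔠ℝ.bracketNormalizer := fun m =>
    add_mem h0 (Submodule.sum_mem _ fun i _ => Submodule.smul_mem _ _ (hi · · i))
  exact piecewiseHeisenbergEvol_add_eq (h𝔠 := h𝔠)
    (fun m => Submodule.mem_bracketNormalizer.mp (hA m)) hS t hC
end

section
/- Let E be a complex Hilbert space, let C and S be continuous linear maps from E to E with S skew-adjoint (adjoint S = −S). If for every x ∈ E and every t ∈ ℝ one has ⟪exp(t • S) x, C (exp(t • S) x)⟫ = ⟪x, C x⟫, then ⁅C, S⁆ = 0. -/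
/-!
Differentiating `t ↦ ⟪exp (t • S) x, C (exp (t • S) x)⟫` at `t = 0` gives
`⟪x, C (S x)⟫ + ⟪S x, C x⟫`, which skew-adjointness of `S` turns into `⟪x, ⁅C, S⁆ x⟫`.
Invariance makes it vanish for every `x`, and over `ℂ` polarization recovers an operator
from its quadratic form.
-/

open NormedSpace ContinuousLinearMap

section Flow

variable {E : Type*} [NormedAddCommGroup E] [NormedSpace ℂ E] [CompleteSpace E]

theorem hasDerivAt_exp_smul_apply_zero (A : E →L[ℂ] E) (x : E) :
    HasDerivAt (fun t : ℝ => exp (t • A) x) (A x) 0 := by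
  have hexp : HasDerivAt (fun t : ℝ => exp (t • A)) A 0 := by
    simpa using hasDerivAt_exp_smul_const (𝕂 := ℝ) A 0
  exact ((apply ℂ E x).restrictScalars ℝ).hasFDerivAt.comp_hasDerivAt 0 hexp

end Flow

section InnerProduct

variable {E : Type*} [NormedAddCommGroup E] [InnerProductSpace ℂ E] [CompleteSpace E]

theorem hasDerivAt_inner_exp_smul_apply_zero (C S : E →L[ℂ] E) (x : E) :
    HasDerivAt (fun t : ℝ => inner ℂ (exp (t • S) x) (C (exp (t • S) x)))
      (inner ℂ x (C (S x)) + inner ℂ (S x) (C x)) 0 := by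
  have hflow := hasDerivAt_exp_smul_apply_zero S x
  have hCflow : HasDerivAt (fun t : ℝ => C (exp (t • S) x)) (C (S x)) 0 :=
    (C.restrictScalars ℝ).hasFDerivAt.comp_hasDerivAt 0 hflow
  simpa using hflow.inner ℂ hCflow

theorem inner_apply_left_eq_neg_of_adjoint_eq_neg {S : E →L[ℂ] E} (hS : adjoint S = -S)
    (x y : E) : inner ℂ (S x) y = -inner ℂ x (S y) := by
  rw [← adjoint_inner_right, hS, neg_apply, inner_neg_right]

theorem inner_lie_apply_eq_zero_of_invariant {C S : E →L[ℂ] E} (hS : adjoint S = -S) {x : E}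
    (h : ∀ t : ℝ, inner ℂ (exp (t • S) x) (C (exp (t • S) x)) = inner ℂ x (C x)) :
    inner ℂ x (⁅C, S⁆ x) = 0 := by
  have hconst : HasDerivAt (fun t : ℝ => inner ℂ (exp (t • S) x) (C (exp (t • S) x))) 0 0 := by
    simpa only [h] using hasDerivAt_const (0 : ℝ) (inner ℂ x (C x))
  have hderiv := (hasDerivAt_inner_exp_smul_apply_zero C S x).unique hconst
  rw [inner_apply_left_eq_neg_of_adjoint_eq_neg hS] at hderiv
  rw [Ring.lie_def, sub_apply, inner_sub_right, mul_def, mul_def, comp_apply, comp_apply]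
  linear_combination hderiv

end InnerProduct

theorem ContinuousLinearMap.eq_zero_of_inner_self_apply_eq_zero {E : Type*} [NormedAddCommGroup E]
    [InnerProductSpace ℂ E] (T : E →L[ℂ] E) (h : ∀ x, inner ℂ x (T x) = 0) : T = 0 := by
  refine coe_injective ((inner_map_self_eq_zero (T : E →ₗ[ℂ] E)).mp fun x => ?_)
  rw [← inner_conj_symm, coe_coe, h, map_zero]

/-- Necessary condition for invariance: if the quadratic form of `C` is invariant under the
flow generated by the skew-adjoint operator `S`, then `⁅C, S⁆ = 0`. -/
theorem commutator_eq_zero_of_invariant_quadratic_form (E : Type*) [NormedAddCommGroup E]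
    [InnerProductSpace ℂ E] [CompleteSpace E] (C S : E →L[ℂ] E)
    (hS : ContinuousLinearMap.adjoint S = -S)
    (h : ∀ (x : E) (t : ℝ),
      (inner ℂ (exp (t • S) x) (C (exp (t • S) x)) : ℂ) = (inner ℂ x (C x) : ℂ)) :
    ⁅C, S⁆ = 0 :=
  eq_zero_of_inner_self_apply_eq_zero _ fun x => inner_lie_apply_eq_zero_of_invariant hS (h x)
end

section
/- Let σx = !![0, 1; 1, 0], σy = !![0, −i; i, 0], σz = !![1, 0; 0, −1] be the Pauli matrices, I₂ the 2 × 2 identity, m ≥ 1, I_m the m × m identity, and D any m × m complex matrix. Define H₅ = (I₂ ⊗ I₂ ⊗ σx) ⊗ I_m, H₆ = (I₂ ⊗ I₂ ⊗ σy) ⊗ I_m, H₈ = (I₂ ⊗ σz ⊗ σz) ⊗ I_m, H₉ = (I₂ ⊗ I₂ ⊗ σz) ⊗ D. Then ⁅⁅H₈, H₅⁆, ⁅H₆, H₉⁆⁆ = (8 i) • ((I₂ ⊗ σz ⊗ σz) ⊗ D). -/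
/-!
Since `⊗ₖ` is multiplicative, a commutator of Kronecker products in which one of the two slots
holds an identity factor is computed in the other slot alone. Applied slot by slot, the nested
commutator collapses onto the ancilla, where the Pauli relations give
`⁅⁅σz, σx⁆, ⁅σy, σz⁆⁆ = ⁅2iσy, 2iσx⁆ = 8iσz`.
-/

open Kronecker

namespace Matrix

variable {R : Type*} {l m n p : Type*}

theorem sub_kronecker [NonUnitalNonAssocRing R] (A₁ A₂ : Matrix l m R) (B : Matrix n p R) :
    (A₁ - A₂) ⊗ₖ B = A₁ ⊗ₖ B - A₂ ⊗ₖ B := by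
  ext ⟨i, i'⟩ ⟨j, j'⟩
  exact sub_mul _ _ _

theorem kronecker_sub [NonUnitalNonAssocRing R] (A : Matrix l m R) (B₁ B₂ : Matrix n p R) :
    A ⊗ₖ (B₁ - B₂) = A ⊗ₖ B₁ - A ⊗ₖ B₂ := by
  ext ⟨i, i'⟩ ⟨j, j'⟩
  exact mul_sub _ _ _

variable [CommRing R] [Fintype l] [Fintype n]

theorem kronecker_lie_one_kronecker [DecidableEq l] (A : Matrix l l R) (B C : Matrix n n R) :
    ⁅A ⊗ₖ B, (1 : Matrix l l R) ⊗ₖ C⁆ = A ⊗ₖ ⁅B, C⁆ := by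
  simp only [Ring.lie_def, ← mul_kronecker_mul, Matrix.mul_one, Matrix.one_mul, kronecker_sub]

theorem kronecker_one_lie_kronecker [DecidableEq n] (A C : Matrix l l R) (D : Matrix n n R) :
    ⁅A ⊗ₖ (1 : Matrix n n R), C ⊗ₖ D⁆ = ⁅A, C⁆ ⊗ₖ D := by
  simp only [Ring.lie_def, ← mul_kronecker_mul, Matrix.mul_one, Matrix.one_mul, sub_kronecker]

end Matrix

section Pauli

open Complex

def pauliX : Matrix (Fin 2) (Fin 2) ℂ := !![0, 1; 1, 0]

def pauliY : Matrix (Fin 2) (Fin 2) ℂ := !![0, -I; I, 0]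

def pauliZ : Matrix (Fin 2) (Fin 2) ℂ := !![1, 0; 0, -1]

theorem pauliX_lie_pauliY : ⁅pauliX, pauliY⁆ = (2 * I) • pauliZ := by
  ext i j
  fin_cases i <;> fin_cases j <;> simp [pauliX, pauliY, pauliZ, Ring.lie_def] <;> ring

theorem pauliY_lie_pauliZ : ⁅pauliY, pauliZ⁆ = (2 * I) • pauliX := by
  ext i j
  fin_cases i <;> fin_cases j <;> simp [pauliX, pauliY, pauliZ, Ring.lie_def] <;> ring

theorem pauliZ_lie_pauliX : ⁅pauliZ, pauliX⁆ = (2 * I) • pauliY := by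
  ext i j
  fin_cases i <;> fin_cases j <;> simp [pauliX, pauliY, pauliZ, Ring.lie_def, mul_assoc] <;> ring

theorem lie_pauliZ_lie_pauliX_lie_pauliY_lie_pauliZ :
    ⁅⁅pauliZ, pauliX⁆, ⁅pauliY, pauliZ⁆⁆ = (8 * I) • pauliZ := by
  have hYX : ⁅pauliY, pauliX⁆ = -((2 * I) • pauliZ) := by
    rw [← pauliX_lie_pauliY, Ring.lie_def, Ring.lie_def, neg_sub]
  rw [pauliZ_lie_pauliX, pauliY_lie_pauliZ]
  simp only [Ring.lie_def, smul_mul_smul_comm, ← smul_sub]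
  rw [← Ring.lie_def, hYX, smul_neg, smul_smul, ← neg_smul]
  congr 1
  linear_combination (-8 * I) * I_sq

end Pauli

theorem ancilla_nested_commutator_intermediate_general (m : ℕ)
    (D : Matrix (Fin m) (Fin m) ℂ) :
    let σx : Matrix (Fin 2) (Fin 2) ℂ := !![0, 1; 1, 0]
    let σy : Matrix (Fin 2) (Fin 2) ℂ := !![0, -Complex.I; Complex.I, 0]
    let σz : Matrix (Fin 2) (Fin 2) ℂ := !![1, 0; 0, -1]
    let I2 : Matrix (Fin 2) (Fin 2) ℂ := 1
    let Im : Matrix (Fin m) (Fin m) ℂ := 1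
    let H5 := (I2 ⊗ₖ I2 ⊗ₖ σx) ⊗ₖ Im
    let H6 := (I2 ⊗ₖ I2 ⊗ₖ σy) ⊗ₖ Im
    let H8 := (I2 ⊗ₖ σz ⊗ₖ σz) ⊗ₖ Im
    let H9 := (I2 ⊗ₖ I2 ⊗ₖ σz) ⊗ₖ D
    ⁅⁅H8, H5⁆, ⁅H6, H9⁆⁆ = ((8 : ℂ) * Complex.I) • ((I2 ⊗ₖ σz ⊗ₖ σz) ⊗ₖ D) := by
  intro σx σy σz I2 Im H5 H6 H8 H9
  have hPauli : ⁅⁅σz, σx⁆, ⁅σy, σz⁆⁆ = (8 * Complex.I) • σz :=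
    lie_pauliZ_lie_pauliX_lie_pauliY_lie_pauliZ
  simp only [H5, H6, H8, H9, Im, I2, Matrix.one_kronecker_one, Matrix.kronecker_one_lie_kronecker,
    Matrix.kronecker_lie_one_kronecker, hPauli, Matrix.kronecker_smul, Matrix.smul_kronecker]

/-- Control-pulse maneuver on the ancillary quantum controller: the nested commutator
`⁅⁅H₈, H₅⁆, ⁅H₆, H₉⁆⁆` of ancilla controls, Ising coupling and tunable ancilla–environment
interaction equals `(8i) • (σz^{(2)} σz^{(b)} ⊗ D)`. -/
theorem ancilla_nested_commutator_intermediate (m : ℕ) (hm : 1 ≤ m)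
    (D : Matrix (Fin m) (Fin m) ℂ) :
    let σx : Matrix (Fin 2) (Fin 2) ℂ := !![0, 1; 1, 0]
    let σy : Matrix (Fin 2) (Fin 2) ℂ := !![0, -Complex.I; Complex.I, 0]
    let σz : Matrix (Fin 2) (Fin 2) ℂ := !![1, 0; 0, -1]
    let I2 : Matrix (Fin 2) (Fin 2) ℂ := 1
    let Im : Matrix (Fin m) (Fin m) ℂ := 1
    let H5 := (I2 ⊗ₖ I2 ⊗ₖ σx) ⊗ₖ Im
    let H6 := (I2 ⊗ₖ I2 ⊗ₖ σy) ⊗ₖ Im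
    let H8 := (I2 ⊗ₖ σz ⊗ₖ σz) ⊗ₖ Im
    let H9 := (I2 ⊗ₖ I2 ⊗ₖ σz) ⊗ₖ D
    ⁅⁅H8, H5⁆, ⁅H6, H9⁆⁆ = ((8 : ℂ) * Complex.I) • ((I2 ⊗ₖ σz ⊗ₖ σz) ⊗ₖ D) :=
  ancilla_nested_commutator_intermediate_general m D
end

section
/- Let σx = !![0, 1; 1, 0], σy = !![0, −i; i, 0], σz = !![1, 0; 0, −1] be the Pauli matrices and I₂ the 2 × 2 identity. In the 4 × 4 complex matrices define δ₁ = σz ⊗ I₂ + I₂ ⊗ σz, δ₂ = σz ⊗ σz, δ₃ = I₂ ⊗ I₂, δ₄ = σx ⊗ σx − σy ⊗ σy, δ₅ = σx ⊗ σy + σy ⊗ σx, and C' = σx ⊗ σx + σy ⊗ σy. Then: (i) ⁅δ_i, C'⁆ = 0 for each i = 1, …, 5; and (ii) the ℂ-linear span of {δ₁, δ₂, δ₃, δ₄, δ₅} is closed under the commutator, i.e. ⁅δ_i, δ_j⁆ lies in span{δ₁, …, δ₅} for all i, j. -/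
/-!
Every operator involved is a combination of two-qubit Pauli strings, so all commutators follow
from the Pauli multiplication table and the mixed-product rule `(A ⊗ B)(C ⊗ D) = AC ⊗ BD`.
In the span, `δ₂ = σz ⊗ σz` and `δ₃ = 1` are central, while `δ₁, δ₄, δ₅` satisfy the `su(2)`
relations `⁅δ₁, δ₄⁆ = 4i δ₅`, `⁅δ₁, δ₅⁆ = -4i δ₄`, `⁅δ₄, δ₅⁆ = 4i δ₁`.
-/

open Kronecker Matrix Complex

namespace Pauli

def σx : Matrix (Fin 2) (Fin 2) ℂ := !![0, 1; 1, 0]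
def σy : Matrix (Fin 2) (Fin 2) ℂ := !![0, -I; I, 0]
def σz : Matrix (Fin 2) (Fin 2) ℂ := !![1, 0; 0, -1]

theorem σx_mul_σx : σx * σx = 1 := by simp [σx, one_fin_two]
theorem σy_mul_σy : σy * σy = 1 := by simp [σy, one_fin_two]
theorem σz_mul_σz : σz * σz = 1 := by simp [σz, one_fin_two]
theorem σx_mul_σy : σx * σy = I • σz := by simp [σx, σy, σz]
theorem σy_mul_σx : σy * σx = -I • σz := by simp [σx, σy, σz]
theorem σy_mul_σz : σy * σz = I • σx := by simp [σx, σy, σz]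
theorem σz_mul_σy : σz * σy = -I • σx := by simp [σx, σy, σz]
theorem σz_mul_σx : σz * σx = I • σy := by simp [σx, σy, σz]
theorem σx_mul_σz : σx * σz = -I • σy := by simp [σx, σy, σz]

end Pauli

namespace TwoQubit

open Pauli

attribute [local instance] LieRing.ofAssociativeRing

/-- `generator i` is the paper's `δ_{i+1}`. -/
def generator : Fin 5 → Matrix (Fin 2 × Fin 2) (Fin 2 × Fin 2) ℂ :=
  ![σz ⊗ₖ 1 + 1 ⊗ₖ σz, σz ⊗ₖ σz, 1 ⊗ₖ 1, σx ⊗ₖ σx - σy ⊗ₖ σy, σx ⊗ₖ σy + σy ⊗ₖ σx]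

def coherence : Matrix (Fin 2 × Fin 2) (Fin 2 × Fin 2) ℂ := σx ⊗ₖ σx + σy ⊗ₖ σy

theorem lie_generator_coherence (i : Fin 5) : ⁅generator i, coherence⁆ = 0 := by
  fin_cases i <;>
  simp only [generator, coherence, Fin.reduceFinMk, Matrix.cons_val, Ring.lie_def, mul_add,
    add_mul, mul_sub, sub_mul, ← mul_kronecker_mul, σx_mul_σx, σy_mul_σy, σx_mul_σy, σy_mul_σx,
    σy_mul_σz, σz_mul_σy, σz_mul_σx, σx_mul_σz, one_mul, mul_one, smul_kronecker, kronecker_smul,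
    smul_smul, neg_mul, mul_neg, neg_neg, I_mul_I] <;>
  module

/-- `σz ⊗ σz` commutes with `A ⊗ B` whenever `A` and `B` both commute or both anticommute
with `σz`; every generator is a combination of such products. -/
theorem commute_generator_one (j : Fin 5) : Commute (generator 1) (generator j) := by
  fin_cases j <;>
  simp only [Commute, SemiconjBy, generator, Fin.reduceFinMk, Matrix.cons_val, mul_add, add_mul,
    mul_sub, sub_mul, ← mul_kronecker_mul, σz_mul_σz, σy_mul_σz, σz_mul_σy, σz_mul_σx, σx_mul_σz,
    one_mul, mul_one, smul_kronecker, kronecker_smul, smul_smul, neg_mul, mul_neg, neg_neg]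

theorem commute_generator_two (j : Fin 5) : Commute (generator 2) (generator j) := by
  rw [show generator 2 = 1 from one_kronecker_one]
  exact Commute.one_left _

theorem lie_generator_su2 :
    ⁅generator 0, generator 3⁆ = (4 * I) • generator 4 ∧
      ⁅generator 0, generator 4⁆ = (-4 * I) • generator 3 ∧
      ⁅generator 3, generator 4⁆ = (4 * I) • generator 0 := by
  refine ⟨?_, ?_, ?_⟩ <;>
  simp only [generator, Matrix.cons_val, Ring.lie_def, mul_add, add_mul, mul_sub, sub_mul,
    ← mul_kronecker_mul, σx_mul_σx, σy_mul_σy, σx_mul_σy, σy_mul_σx, σy_mul_σz, σz_mul_σy,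
    σz_mul_σx, σx_mul_σz, one_mul, mul_one, smul_kronecker, kronecker_smul, neg_mul] <;>
  module

theorem lie_generator_mem_span (i j : Fin 5) :
    ⁅generator i, generator j⁆ ∈ Submodule.span ℂ (Set.range generator) := by
  have smul_mem (c : ℂ) (k : Fin 5) : c • generator k ∈ Submodule.span ℂ (Set.range generator) :=
    Submodule.smul_mem _ c (Submodule.subset_span ⟨k, rfl⟩)
  obtain ⟨h03, h04, h34⟩ := lie_generator_su2
  fin_cases i <;> fin_cases j <;>
    simp only [Fin.reduceFinMk, lie_self, (commute_generator_one _).lie_eq,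
      (commute_generator_one _).symm.lie_eq, (commute_generator_two _).lie_eq,
      (commute_generator_two _).symm.lie_eq, h03, h04, h34,
      ← lie_skew (generator 3) (generator 0), ← lie_skew (generator 4) (generator 0),
      ← lie_skew (generator 4) (generator 3)] <;>
    first | exact zero_mem _ | exact smul_mem _ _ | exact neg_mem (smul_mem _ _)

end TwoQubit

open TwoQubit in
/-- The five operators `δ₁, …, δ₅` commute with the coherence operator
`C' = σx ⊗ σx + σy ⊗ σy`, and their ℂ-linear span is closed under the commutator:
they exhibit the invariant distribution `Δ` for the restructured 2-qubit system. -/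
theorem invariant_distribution_two_qubit :
    let σx : Matrix (Fin 2) (Fin 2) ℂ := !![0, 1; 1, 0]
    let σy : Matrix (Fin 2) (Fin 2) ℂ := !![0, -Complex.I; Complex.I, 0]
    let σz : Matrix (Fin 2) (Fin 2) ℂ := !![1, 0; 0, -1]
    let I2 : Matrix (Fin 2) (Fin 2) ℂ := 1
    let δ : Fin 5 → Matrix (Fin 2 × Fin 2) (Fin 2 × Fin 2) ℂ :=
      ![σz ⊗ₖ I2 + I2 ⊗ₖ σz, σz ⊗ₖ σz, I2 ⊗ₖ I2,
        σx ⊗ₖ σx - σy ⊗ₖ σy, σx ⊗ₖ σy + σy ⊗ₖ σx]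
    let C' := σx ⊗ₖ σx + σy ⊗ₖ σy
    (∀ i, ⁅δ i, C'⁆ = 0) ∧
      ∀ i j, ⁅δ i, δ j⁆ ∈ Submodule.span ℂ (Set.range δ) :=
  ⟨lie_generator_coherence, lie_generator_mem_span⟩
end
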